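/- arXiv:2310.05528 — 3 statements merged into one kernel-verified Lean document; each statement's English description precedes it below -/
import Mathlib

section
/- Let B be a normed space and let (z_n)_{n ∈ ℕ} be a bounded sequence in B. Then limsup_{H→∞} limsup_{M→∞} (1/M) · ∑_{m=1}^{M} ‖(1/H) · ∑_{h=1}^{H} z_{m+h}‖ = 0 if and only if for every strictly increasing sequence (b_k)_{k≥1} of positive integers whose range {b_k : k ≥ 1} has natural density 0 (i.e., (1/M) · #{k : b_k ≤ M} → 0 as M → ∞), one has lim_{K→∞} (1/b_K) · ∑_{k=1}^{K−1} ‖∑_{n=b_k}^{b_{k+1}−1} z_n‖ = 0. -/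
open Filter

set_option linter.unusedSectionVars false
set_option linter.unusedVariables false
set_option maxHeartbeats 1000000

section ShortAvgAux
open Finset
variable {B : Type*} [NormedAddCommGroup B] [NormedSpace ℝ B]

private lemma norm_sub_shift (z : ℕ → B) {R : ℝ} (hR : ∀ n, ‖z n‖ ≤ R) (a c h : ℕ) :
    ‖(∑ n ∈ Ico a c, z n) - ∑ n ∈ Ico (a+h) (c+h), z n‖ ≤ 2 * h * R := by
  have hRnn : 0 ≤ R := le_trans (norm_nonneg _) (hR 0)
  rw [← Finset.sum_sdiff_sub_sum_sdiff]
  have key : ∀ s : Finset ℕ, s.card ≤ h → ‖∑ n ∈ s, z n‖ ≤ h * R := by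
    intro s hs
    calc ‖∑ n ∈ s, z n‖ ≤ ∑ n ∈ s, ‖z n‖ := norm_sum_le _ _
    _ ≤ ∑ n ∈ s, R := Finset.sum_le_sum (fun n _ => hR n)
    _ = s.card * R := by rw [Finset.sum_const, nsmul_eq_mul]
    _ ≤ h * R := by
        apply mul_le_mul_of_nonneg_right _ hRnn
        exact_mod_cast hs
  have h1 : (Ico a c \ Ico (a+h) (c+h)).card ≤ h := by
    have : Ico a c \ Ico (a+h) (c+h) ⊆ Ico a (a+h) := by
      intro n hn
      simp only [Finset.mem_sdiff, Finset.mem_Ico, not_and, not_lt] at hn ⊢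
      omega
    calc _ ≤ (Ico a (a+h)).card := Finset.card_le_card this
    _ ≤ h := by rw [Nat.card_Ico]; omega
  have h2 : (Ico (a+h) (c+h) \ Ico a c).card ≤ h := by
    have : Ico (a+h) (c+h) \ Ico a c ⊆ Ico c (c+h) := by
      intro n hn
      simp only [Finset.mem_sdiff, Finset.mem_Ico, not_and, not_lt] at hn ⊢
      omega
    calc _ ≤ (Ico c (c+h)).card := Finset.card_le_card this
    _ ≤ h := by rw [Nat.card_Ico]; omega
  calc ‖_ - _‖ ≤ ‖∑ n ∈ Ico a c \ Ico (a+h) (c+h), z n‖ + ‖∑ n ∈ Ico (a+h) (c+h) \ Ico a c, z n‖ :=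
        norm_sub_le _ _
  _ ≤ h * R + h * R := add_le_add (key _ h1) (key _ h2)
  _ = 2 * h * R := by ring

private lemma block_le (z : ℕ → B) {R : ℝ} (hR : ∀ n, ‖z n‖ ≤ R) {H : ℕ} (hH : 1 ≤ H)
    (a c : ℕ) :
    ‖∑ n ∈ Ico a c, z n‖ ≤
      (∑ m ∈ Ico a c, ‖(H:ℝ)⁻¹ • ∑ h ∈ Icc 1 H, z (m+h)‖) + 2 * H * R := by
  have hRnn : 0 ≤ R := le_trans (norm_nonneg _) (hR 0)
  have hHpos : (0:ℝ) < H := by exact_mod_cast hH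
  set S : B := ∑ n ∈ Ico a c, z n with hS
  have hid : S = ((H:ℝ)⁻¹ • ∑ h ∈ Icc 1 H, ∑ m ∈ Ico a c, z (m+h))
      + (H:ℝ)⁻¹ • ∑ h ∈ Icc 1 H, (S - ∑ m ∈ Ico a c, z (m+h)) := by
    rw [← smul_add, ← Finset.sum_add_distrib]
    simp only [add_sub_cancel]
    rw [Finset.sum_const, Nat.card_Icc]
    simp only [Nat.add_sub_cancel]
    rw [← Nat.cast_smul_eq_nsmul ℝ, smul_smul, inv_mul_cancel₀ (ne_of_gt hHpos), one_smul]
  have hswap : (H:ℝ)⁻¹ • ∑ h ∈ Icc 1 H, ∑ m ∈ Ico a c, z (m+h)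
      = ∑ m ∈ Ico a c, (H:ℝ)⁻¹ • ∑ h ∈ Icc 1 H, z (m+h) := by
    rw [Finset.sum_comm, Finset.smul_sum]
  calc ‖S‖ ≤ ‖(H:ℝ)⁻¹ • ∑ h ∈ Icc 1 H, ∑ m ∈ Ico a c, z (m+h)‖
      + ‖(H:ℝ)⁻¹ • ∑ h ∈ Icc 1 H, (S - ∑ m ∈ Ico a c, z (m+h))‖ := by
        nth_rewrite 1 [hid]; exact norm_add_le _ _
  _ ≤ (∑ m ∈ Ico a c, ‖(H:ℝ)⁻¹ • ∑ h ∈ Icc 1 H, z (m+h)‖) + 2 * H * R := by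
      apply add_le_add
      · rw [hswap]; exact norm_sum_le _ _
      · rw [norm_smul, norm_inv, Real.norm_natCast]
        have key : ‖∑ h ∈ Icc 1 H, (S - ∑ m ∈ Ico a c, z (m+h))‖ ≤ ∑ h ∈ Icc 1 H, (2 * h * R) := by
          refine le_trans (norm_sum_le _ _) (Finset.sum_le_sum ?_)
          intro h hh
          rw [Finset.sum_Ico_add' (fun n => z n) a c h]
          exact norm_sub_shift z hR a c h
        calc (H:ℝ)⁻¹ * ‖∑ h ∈ Icc 1 H, (S - ∑ m ∈ Ico a c, z (m+h))‖
            ≤ (H:ℝ)⁻¹ * ∑ h ∈ Icc 1 H, (2 * h * R) := by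
              apply mul_le_mul_of_nonneg_left key (by positivity)
        _ ≤ (H:ℝ)⁻¹ * ∑ h ∈ Icc 1 H, (2 * H * R) := by
              apply mul_le_mul_of_nonneg_left _ (by positivity)
              apply Finset.sum_le_sum
              intro h hh
              simp only [Finset.mem_Icc] at hh
              have : (h:ℝ) ≤ H := by exact_mod_cast hh.2
              nlinarith
        _ = (H:ℝ)⁻¹ * (H * (2 * H * R)) := by
              rw [Finset.sum_const, Nat.card_Icc]; simp [nsmul_eq_mul]
        _ = 2 * H * R := by field_simp
private lemma sum_partition (u : ℕ → ℕ) (hu : Monotone u) (g : ℕ → ℝ) :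
    ∀ K, 1 ≤ K → ∑ k ∈ Ico 1 K, (∑ m ∈ Ico (u k) (u (k+1)), g m) = ∑ m ∈ Ico (u 1) (u K), g m := by
  intro K
  induction K with
  | zero => omega
  | succ K ih =>
    intro _
    rcases Nat.lt_or_ge 1 (K+1) with hK | hK
    · have hK1 : 1 ≤ K := by omega
      rw [Finset.sum_Ico_succ_top hK1, ih hK1]
      exact Finset.sum_Ico_consecutive _ (hu (by omega : 1 ≤ K)) (hu (by omega : K ≤ K+1))
    · have : K = 0 := by omega
      subst this
      simp

private lemma forward_dir (z : ℕ → B) {R : ℝ} (hR : ∀ n, ‖z n‖ ≤ R) (hR1 : 1 ≤ R)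
    (hL : Filter.limsup (fun H : ℕ =>
        Filter.limsup (fun M : ℕ =>
          (1 / (M : ℝ)) * ∑ m ∈ Finset.Icc 1 M,
            ‖(H : ℝ)⁻¹ • ∑ h ∈ Finset.Icc 1 H, z (m + h)‖) Filter.atTop) Filter.atTop = 0)
    (b : ℕ → ℕ) (hb : StrictMono b) (hb1 : 0 < b 1)
    (hdens : Filter.Tendsto (fun M : ℕ =>
            (((Finset.Icc 1 M).filter (fun k => b k ≤ M)).card : ℝ) / M)
          Filter.atTop (nhds 0)) :
    Filter.Tendsto (fun K : ℕ => (1 / (b K : ℝ)) *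
            ∑ k ∈ Finset.Ico 1 K, ‖∑ n ∈ Finset.Ico (b k) (b (k + 1)), z n‖)
          Filter.atTop (nhds 0) := by
  have hRnn : (0:ℝ) ≤ R := by linarith
  set a : ℕ → ℕ → ℝ := fun H m => ‖(H:ℝ)⁻¹ • ∑ h ∈ Finset.Icc 1 H, z (m+h)‖ with ha_def
  set A : ℕ → ℕ → ℝ := fun H M => (1 / (M : ℝ)) * ∑ m ∈ Finset.Icc 1 M, a H m with hA_def
  set g : ℕ → ℝ := fun H => Filter.limsup (A H) Filter.atTop with hg_def
  have hann : ∀ H m, 0 ≤ a H m := fun H m => norm_nonneg _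
  have haR : ∀ H m, a H m ≤ R := by
    intro H m
    rcases Nat.eq_zero_or_pos H with h0 | hH
    · subst h0; simp [ha_def]; linarith
    · have hHpos : (0:ℝ) < H := by exact_mod_cast hH
      calc a H m = (H:ℝ)⁻¹ * ‖∑ h ∈ Finset.Icc 1 H, z (m+h)‖ := by
            rw [ha_def]; simp [norm_smul, abs_of_pos hHpos]
      _ ≤ (H:ℝ)⁻¹ * (H * R) := by
            apply mul_le_mul_of_nonneg_left _ (by positivity)
            calc ‖∑ h ∈ Finset.Icc 1 H, z (m+h)‖ ≤ ∑ h ∈ Finset.Icc 1 H, ‖z (m+h)‖ :=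
                  norm_sum_le _ _
            _ ≤ ∑ h ∈ Finset.Icc 1 H, R := Finset.sum_le_sum fun h _ => hR _
            _ = H * R := by rw [Finset.sum_const, Nat.card_Icc]; simp [nsmul_eq_mul]
      _ = R := by field_simp
  have hAnn : ∀ H M, 0 ≤ A H M := by
    intro H M
    apply mul_nonneg (by positivity)
    exact Finset.sum_nonneg fun m _ => hann H m
  have hAR : ∀ H M, A H M ≤ R := by
    intro H M
    rcases Nat.eq_zero_or_pos M with h0 | hM
    · subst h0; simp [hA_def]; linarith
    · have hMpos : (0:ℝ) < M := by exact_mod_cast hM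
      calc A H M ≤ (1/(M:ℝ)) * ∑ m ∈ Finset.Icc 1 M, R := by
            apply mul_le_mul_of_nonneg_left _ (by positivity)
            exact Finset.sum_le_sum fun m _ => haR H m
      _ = (1/(M:ℝ)) * (M * R) := by rw [Finset.sum_const, Nat.card_Icc]; simp [nsmul_eq_mul]
      _ = R := by field_simp
  have hAbdd : ∀ H, IsBoundedUnder (· ≤ ·) Filter.atTop (A H) :=
    fun H => Filter.isBoundedUnder_of ⟨R, fun M => hAR H M⟩
  have hgR : ∀ H, g H ≤ R := by
    intro H
    exact Filter.limsup_le_of_le (Filter.isCoboundedUnder_le_of_le _ fun M => hAnn H M)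
      (Filter.Eventually.of_forall fun M => hAR H M)
  have hgbdd : IsBoundedUnder (· ≤ ·) Filter.atTop g := Filter.isBoundedUnder_of ⟨R, hgR⟩
  rw [Metric.tendsto_atTop]
  intro ε hε
  -- choose H
  have hLlt : Filter.limsup g Filter.atTop < ε/2 := by rw [hL]; linarith
  have hev : ∀ᶠ H in Filter.atTop, g H < ε/2 := Filter.eventually_lt_of_limsup_lt hLlt hgbdd
  obtain ⟨H, hH1, hgH⟩ : ∃ H : ℕ, 1 ≤ H ∧ g H < ε/2 := by
    rcases (hev.and (Filter.eventually_ge_atTop 1)).exists with ⟨H, h1, h2⟩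
    exact ⟨H, h2, h1⟩
  have h2 : ∀ᶠ M in Filter.atTop, A H M < ε/2 :=
    Filter.eventually_lt_of_limsup_lt hgH (hAbdd H)
  have hbtop : Filter.Tendsto b Filter.atTop Filter.atTop := hb.tendsto_atTop
  have h3 : ∀ᶠ K in Filter.atTop, A H (b K) < ε/2 := hbtop.eventually h2
  -- K / b K → 0
  have hbKpos : ∀ K, 1 ≤ K → (0:ℝ) < b K := by
    intro K hK
    have : 1 ≤ b K := le_trans hb1 (hb.monotone hK)
    exact_mod_cast this
  have hcard : ∀ K : ℕ, 1 ≤ K →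
      (K:ℝ) ≤ (((Finset.Icc 1 (b K)).filter (fun k => b k ≤ b K)).card : ℝ) := by
    intro K hK
    have hsub : Finset.Icc 1 K ⊆ (Finset.Icc 1 (b K)).filter (fun k => b k ≤ b K) := by
      intro k hk
      simp only [Finset.mem_Icc, Finset.mem_filter] at hk ⊢
      refine ⟨⟨hk.1, le_trans (le_trans hk.2 hb.le_apply) le_rfl⟩, hb.monotone hk.2⟩
    have := Finset.card_le_card hsub
    rw [Nat.card_Icc] at this
    have : K ≤ ((Finset.Icc 1 (b K)).filter (fun k => b k ≤ b K)).card := by omega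
    exact_mod_cast this
  have hKb : Filter.Tendsto (fun K : ℕ => (K:ℝ)/(b K)) Filter.atTop (nhds 0) := by
    apply squeeze_zero' (Filter.eventually_atTop.2 ⟨1, fun K hK => by positivity⟩)
      (g := fun K => (((Finset.Icc 1 (b K)).filter (fun k => b k ≤ b K)).card : ℝ) / (b K))
      (Filter.eventually_atTop.2 ⟨1, fun K hK => ?_⟩) (hdens.comp hbtop)
    exact div_le_div_of_nonneg_right (hcard K hK) (hbKpos K hK).le
  have h4 : ∀ᶠ K : ℕ in Filter.atTop, 2*(H:ℝ)*R*((K:ℝ)/(b K)) < ε/2 := by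
    have h5 := hKb.const_mul (2*(H:ℝ)*R)
    rw [mul_zero] at h5
    exact h5.eventually_lt_const (by positivity)
  have key : ∀ K : ℕ, 1 ≤ K →
      (1 / (b K : ℝ)) * ∑ k ∈ Finset.Ico 1 K, ‖∑ n ∈ Finset.Ico (b k) (b (k+1)), z n‖
        ≤ A H (b K) + 2*(H:ℝ)*R*((K:ℝ)/(b K)) := by
    intro K hK
    have hbK : (0:ℝ) < b K := hbKpos K hK
    have step1 : ∑ k ∈ Finset.Ico 1 K, ‖∑ n ∈ Finset.Ico (b k) (b (k+1)), z n‖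
        ≤ ∑ k ∈ Finset.Ico 1 K, ((∑ m ∈ Finset.Ico (b k) (b (k+1)), a H m) + 2*H*R) :=
      Finset.sum_le_sum fun k _ => block_le z hR hH1 (b k) (b (k+1))
    have step2 : ∑ k ∈ Finset.Ico 1 K, ((∑ m ∈ Finset.Ico (b k) (b (k+1)), a H m) + 2*(H:ℝ)*R)
        = (∑ m ∈ Finset.Ico (b 1) (b K), a H m) + ((K-1 : ℕ) : ℝ) * (2*H*R) := by
      rw [Finset.sum_add_distrib, sum_partition b hb.monotone (a H) K hK, Finset.sum_const,
        Nat.card_Ico, nsmul_eq_mul]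
    have step3 : (∑ m ∈ Finset.Ico (b 1) (b K), a H m) ≤ ∑ m ∈ Finset.Icc 1 (b K), a H m := by
      apply Finset.sum_le_sum_of_subset_of_nonneg _ (fun m _ _ => hann H m)
      intro m hm
      simp only [Finset.mem_Ico, Finset.mem_Icc] at hm ⊢
      omega
    have hcast : ((K-1 : ℕ) : ℝ) ≤ (K : ℝ) := by
      have : (K - 1 : ℕ) ≤ K := Nat.sub_le _ _
      exact_mod_cast this
    calc (1 / (b K : ℝ)) * ∑ k ∈ Finset.Ico 1 K, ‖∑ n ∈ Finset.Ico (b k) (b (k+1)), z n‖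
        ≤ (1 / (b K : ℝ)) * ((∑ m ∈ Finset.Icc 1 (b K), a H m) + (K:ℝ)*(2*H*R)) := by
          apply mul_le_mul_of_nonneg_left _ (by positivity)
          refine le_trans step1 (le_trans (le_of_eq step2) (add_le_add step3 ?_))
          exact mul_le_mul_of_nonneg_right hcast (by positivity)
    _ = A H (b K) + 2*(H:ℝ)*R*((K:ℝ)/(b K)) := by
          rw [hA_def]
          field_simp
  obtain ⟨N1, hN1⟩ := Filter.eventually_atTop.1 h3
  obtain ⟨N2, hN2⟩ := Filter.eventually_atTop.1 h4
  refine ⟨max (max N1 N2) 1, fun K hK => ?_⟩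
  have hK1 : 1 ≤ K := le_trans (le_max_right _ _) hK
  have hKN1 : N1 ≤ K := le_trans (le_trans (le_max_left _ _) (le_max_left _ _)) hK
  have hKN2 : N2 ≤ K := le_trans (le_trans (le_max_right _ _) (le_max_left _ _)) hK
  have hSnn : 0 ≤ (1 / (b K : ℝ)) * ∑ k ∈ Finset.Ico 1 K, ‖∑ n ∈ Finset.Ico (b k) (b (k+1)), z n‖ :=
    mul_nonneg (by positivity) (Finset.sum_nonneg fun k _ => norm_nonneg _)
  rw [Real.dist_eq, sub_zero, abs_of_nonneg hSnn]
  calc (1 / (b K : ℝ)) * ∑ k ∈ Finset.Ico 1 K, ‖∑ n ∈ Finset.Ico (b k) (b (k+1)), z n‖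
      ≤ A H (b K) + 2*(H:ℝ)*R*((K:ℝ)/(b K)) := key K hK1
  _ < ε/2 + ε/2 := add_lt_add (hN1 K hKN1) (hN2 K hKN2)
  _ = ε := by ring

private lemma exists_segment (z : ℕ → B) {R ε : ℝ} (hR : ∀ n, ‖z n‖ ≤ R) (hR1 : 1 ≤ R)
    (hε : 0 < ε)
    (hfreq : ∀ N : ℕ, ∃ H : ℕ, N ≤ H ∧ ∀ P' : ℕ, ∃ M : ℕ, P' ≤ M ∧
      ε < (1 / (M : ℝ)) * ∑ m ∈ Finset.Icc 1 M, ‖(H:ℝ)⁻¹ • ∑ h ∈ Finset.Icc 1 H, z (m+h)‖) :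
    ∀ j t P : ℕ, ∃ q H n : ℕ, j + 1 ≤ H ∧ 1 ≤ n ∧ P < q ∧ (j+1)*(t+1) ≤ q ∧
      (ε/4) * ((q + n*H : ℕ) : ℝ) ≤ ∑ i ∈ Finset.range n, ‖∑ x ∈ Finset.Ico (q+i*H) (q+i*H+H), z x‖ := by
  intro j t P
  set P₀ : ℕ := max P ((j+1)*(t+1)) with hP₀
  obtain ⟨H, hHj, hM⟩ := hfreq (j+1)
  have hH1 : 1 ≤ H := by omega
  have hHpos : (0:ℝ) < H := by exact_mod_cast hH1
  obtain ⟨M, hMge, hMA⟩ := hM (max (H+1) (max P₀ ⌈2*(P₀:ℝ)*R/ε⌉₊))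
  have hMH : H + 1 ≤ M := le_trans (le_max_left _ _) hMge
  have hM1 : 1 ≤ M := by omega
  have hMpos : (0:ℝ) < M := by exact_mod_cast hM1
  have hP₀M : P₀ ≤ M := le_trans (le_trans (le_max_left _ _) (le_max_right _ _)) hMge
  have hMP : 2*(P₀:ℝ)*R/ε ≤ M := by
    have h1 : ⌈2*(P₀:ℝ)*R/ε⌉₊ ≤ M := le_trans (le_trans (le_max_right _ _) (le_max_right _ _)) hMge
    exact le_trans (Nat.le_ceil _) (by exact_mod_cast h1)
  -- block sums
  set Bl : ℕ → B := fun m => ∑ x ∈ Finset.Ico (m+1) (m+1+H), z x with hBl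
  have hBlock : ∀ m : ℕ, ∑ h ∈ Finset.Icc 1 H, z (m+h) = Bl m := by
    intro m
    rw [hBl]
    have h1 : ∀ h ∈ Finset.Icc 1 H, z (m+h) = z (h+m) := fun h _ => by rw [add_comm]
    rw [Finset.sum_congr rfl h1]
    have h2 : Finset.Icc 1 H = Finset.Ico 1 (H+1) := by rw [Finset.Ico_add_one_right_eq_Icc]
    rw [h2, Finset.sum_Ico_add' (fun x => z x) 1 (H+1) m,
      show 1+m = m+1 from by omega, show H+1+m = m+1+H from by omega]
  have hBlR : ∀ m, ‖Bl m‖ ≤ H * R := by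
    intro m
    calc ‖Bl m‖ ≤ ∑ x ∈ Finset.Ico (m+1) (m+1+H), ‖z x‖ := norm_sum_le _ _
    _ ≤ ∑ x ∈ Finset.Ico (m+1) (m+1+H), R := Finset.sum_le_sum fun x _ => hR x
    _ = H * R := by
        rw [Finset.sum_const, Nat.card_Ico, show m+1+H-(m+1) = H from by omega, nsmul_eq_mul]
  have hBlnn : ∀ m, (0:ℝ) ≤ ‖Bl m‖ := fun m => norm_nonneg _
  -- step 1
  have step1 : ε * H * M < ∑ m ∈ Finset.Icc 1 M, ‖Bl m‖ := by
    have h1 : ∀ m ∈ Finset.Icc 1 M, ‖(H:ℝ)⁻¹ • ∑ h ∈ Finset.Icc 1 H, z (m+h)‖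
        = (H:ℝ)⁻¹ * ‖Bl m‖ := by
      intro m _
      rw [hBlock m, norm_smul, norm_inv, Real.norm_natCast]
    rw [Finset.sum_congr rfl h1, ← Finset.mul_sum] at hMA
    have h2 : (1/(M:ℝ)) * ((H:ℝ)⁻¹ * ∑ m ∈ Finset.Icc 1 M, ‖Bl m‖)
        = (∑ m ∈ Finset.Icc 1 M, ‖Bl m‖) / (M * H) := by field_simp
    rw [h2] at hMA
    have := (lt_div_iff₀ (by positivity : (0:ℝ) < (M:ℝ)*(H:ℝ))).1 hMA
    nlinarith
  -- step 2 : restrict to Ioc P₀ M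
  have hsplit : (∑ m ∈ Finset.Ioc 0 P₀, ‖Bl m‖) + ∑ m ∈ Finset.Ioc P₀ M, ‖Bl m‖
      = ∑ m ∈ Finset.Icc 1 M, ‖Bl m‖ := by
    rw [show Finset.Icc 1 M = Finset.Ioc 0 M from by ext x; simp; omega]
    exact Finset.sum_Ioc_consecutive _ (Nat.zero_le _) hP₀M
  have hsmall : ∑ m ∈ Finset.Ioc 0 P₀, ‖Bl m‖ ≤ P₀ * (H * R) := by
    calc ∑ m ∈ Finset.Ioc 0 P₀, ‖Bl m‖ ≤ ∑ m ∈ Finset.Ioc 0 P₀, (H:ℝ)*R :=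
          Finset.sum_le_sum fun m _ => hBlR m
    _ = P₀ * (H * R) := by rw [Finset.sum_const, Nat.card_Ioc, nsmul_eq_mul]; norm_num
  have step2 : ε * H * M / 2 < ∑ m ∈ Finset.Ioc P₀ M, ‖Bl m‖ := by
    have h3 : (P₀:ℝ) * (H * R) ≤ ε * H * M / 2 := by
      rw [div_le_iff₀ hε] at hMP
      have hHR : (0:ℝ) < H := hHpos
      nlinarith
    linarith
  -- step 3 : pigeonhole on residues
  have hfib : ∑ r ∈ Finset.range H, ∑ m ∈ (Finset.Ioc P₀ M).filter (fun m => m % H = r), ‖Bl m‖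
      = ∑ m ∈ Finset.Ioc P₀ M, ‖Bl m‖ :=
    Finset.sum_fiberwise_of_maps_to (fun m _ => Finset.mem_range.2 (Nat.mod_lt _ (by omega))) _
  obtain ⟨r, hrsum⟩ : ∃ r, (ε/2)*M < ∑ m ∈ (Finset.Ioc P₀ M).filter (fun m => m % H = r), ‖Bl m‖ := by
    by_contra hcon
    push_neg at hcon
    have h4 : ∑ m ∈ Finset.Ioc P₀ M, ‖Bl m‖ ≤ ∑ r ∈ Finset.range H, (ε/2)*(M:ℝ) := by
      rw [← hfib]
      exact Finset.sum_le_sum fun r _ => hcon r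
    rw [Finset.sum_const, Finset.card_range, nsmul_eq_mul] at h4
    have : (H:ℝ) * ((ε/2)*M) = ε * H * M / 2 := by ring
    rw [this] at h4
    linarith
  -- step 4 : fiber is an AP
  set F : Finset ℕ := (Finset.Ioc P₀ M).filter (fun m => m % H = r) with hF
  have hFne : F.Nonempty := by
    by_contra hcon
    rw [Finset.not_nonempty_iff_eq_empty] at hcon
    rw [hcon, Finset.sum_empty] at hrsum
    nlinarith
  set m₀ : ℕ := F.min' hFne with hm₀def
  have hm₀F : m₀ ∈ F := Finset.min'_mem _ _
  have hm₀P : P₀ < m₀ := by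
    have := (Finset.mem_filter.1 hm₀F).1
    exact (Finset.mem_Ioc.1 this).1
  have hm₀M : m₀ ≤ M := by
    have := (Finset.mem_filter.1 hm₀F).1
    exact (Finset.mem_Ioc.1 this).2
  have hm₀r : m₀ % H = r := (Finset.mem_filter.1 hm₀F).2
  set n : ℕ := (M - m₀)/H + 1 with hn
  set q : ℕ := m₀ + 1 with hq
  have hFeq : F = (Finset.range n).image (fun i => m₀ + i*H) := by
    ext m
    simp only [Finset.mem_image, Finset.mem_range, hF, Finset.mem_filter, Finset.mem_Ioc]
    constructor
    · rintro ⟨⟨hPm, hmM⟩, hmr⟩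
      have hm₀m : m₀ ≤ m := Finset.min'_le _ _ (by
        simp only [hF, Finset.mem_filter, Finset.mem_Ioc]; exact ⟨⟨hPm, hmM⟩, hmr⟩)
      have hmod : m₀ ≡ m [MOD H] := by
        unfold Nat.ModEq
        rw [hm₀r, hmr]
      obtain ⟨i, hi⟩ := (Nat.modEq_iff_dvd' hm₀m).1 hmod
      rw [mul_comm] at hi
      refine ⟨i, ?_, by omega⟩
      have hiH : i * H ≤ M - m₀ := by omega
      have : i ≤ (M - m₀)/H := (Nat.le_div_iff_mul_le (by omega)).2 hiH
      omega
    · rintro ⟨i, hin, rfl⟩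
      have hiH : i * H ≤ M - m₀ := by
        have h5 : i ≤ (M - m₀)/H := by omega
        calc i * H ≤ ((M - m₀)/H) * H := Nat.mul_le_mul_right _ h5
        _ ≤ M - m₀ := Nat.div_mul_le_self _ _
      exact ⟨⟨by omega, by omega⟩, by rw [Nat.add_mul_mod_self_right, hm₀r]⟩
  have hinj : ∀ i ∈ Finset.range n, ∀ j' ∈ Finset.range n,
      m₀ + i*H = m₀ + j'*H → i = j' := by
    intro i _ j' _ hij
    have : i * H = j' * H := by omega
    exact Nat.eq_of_mul_eq_mul_right (by omega) this
  have hsum_eq : ∑ m ∈ F, ‖Bl m‖ = ∑ i ∈ Finset.range n, ‖Bl (m₀ + i*H)‖ := by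
    rw [hFeq, Finset.sum_image hinj]
  have hBlq : ∀ i : ℕ, Bl (m₀ + i*H) = ∑ x ∈ Finset.Ico (q+i*H) (q+i*H+H), z x := by
    intro i
    rw [hBl]
    show ∑ x ∈ Finset.Ico (m₀+i*H+1) (m₀+i*H+1+H), z x = _
    rw [show m₀+i*H+1 = q+i*H from by omega]
  have hPP₀ : P ≤ P₀ := le_max_left _ _
  have hP₀2 : (j+1)*(t+1) ≤ P₀ := le_max_right _ _
  have h1n : 1 ≤ n := by rw [hn]; exact Nat.le_add_left 1 _
  have hm₀P' : P < m₀ := lt_of_le_of_lt hPP₀ hm₀P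
  have hm₀g : (j+1)*(t+1) < m₀ := lt_of_le_of_lt hP₀2 hm₀P
  have hmq : m₀ ≤ q := by rw [hq]; exact Nat.le_succ _
  have hPq : P < q := lt_of_lt_of_le hm₀P' hmq
  have hq2 : (j+1)*(t+1) ≤ q := le_trans (le_of_lt hm₀g) hmq
  refine ⟨q, H, n, hHj, h1n, hPq, hq2, ?_⟩
  have hsum2 : (ε/2)*M < ∑ i ∈ Finset.range n, ‖∑ x ∈ Finset.Ico (q+i*H) (q+i*H+H), z x‖ := by
    calc (ε/2)*(M:ℝ) < ∑ m ∈ F, ‖Bl m‖ := hrsum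
    _ = ∑ i ∈ Finset.range n, ‖Bl (m₀ + i*H)‖ := hsum_eq
    _ = ∑ i ∈ Finset.range n, ‖∑ x ∈ Finset.Ico (q+i*H) (q+i*H+H), z x‖ := by
        exact Finset.sum_congr rfl fun i _ => by rw [hBlq i]
  have hqnH : (q + n*H : ℕ) ≤ 2*M := by
    have h6 : ((M - m₀)/H) * H ≤ M - m₀ := Nat.div_mul_le_self _ _
    have : q + n*H = m₀ + 1 + ((M-m₀)/H)*H + H := by rw [hq, hn]; ring
    omega
  have hcast : ((q + n*H : ℕ) : ℝ) ≤ 2*M := by exact_mod_cast hqnH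
  calc (ε/4) * ((q + n*H : ℕ) : ℝ) ≤ (ε/4) * (2*M) := by
        apply mul_le_mul_of_nonneg_left hcast (by positivity)
  _ = (ε/2)*M := by ring
  _ ≤ ∑ i ∈ Finset.range n, ‖∑ x ∈ Finset.Ico (q+i*H) (q+i*H+H), z x‖ := le_of_lt hsum2

private lemma construct (z : ℕ → B) {ε : ℝ} (hε : 0 < ε)
    (hex : ∀ j t P : ℕ, ∃ q H n : ℕ, j + 1 ≤ H ∧ 1 ≤ n ∧ P < q ∧ (j+1)*(t+1) ≤ q ∧
      (ε/4) * ((q + n*H : ℕ) : ℝ) ≤ ∑ i ∈ Finset.range n, ‖∑ x ∈ Finset.Ico (q+i*H) (q+i*H+H), z x‖) :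
    ∃ b : ℕ → ℕ, StrictMono b ∧ 0 < b 1 ∧
      Filter.Tendsto (fun M : ℕ =>
          (((Finset.Icc 1 M).filter (fun k => b k ≤ M)).card : ℝ) / M) Filter.atTop (nhds 0) ∧
      ¬ Filter.Tendsto (fun K : ℕ => (1 / (b K : ℝ)) *
          ∑ k ∈ Finset.Ico 1 K, ‖∑ n ∈ Finset.Ico (b k) (b (k + 1)), z n‖)
        Filter.atTop (nhds 0) := by
  choose Q Hf Nf hH1 hn1 hPq hq2 hsum using hex
  set st : ℕ → ℕ × ℕ := fun j => Nat.rec ((1, 0) : ℕ × ℕ)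
    (fun j p => (p.1 + Nf j p.1 p.2 + 1, Q j p.1 p.2 + (Nf j p.1 p.2) * (Hf j p.1 p.2))) j
    with hst
  set t : ℕ → ℕ := fun j => (st j).1 with htdef
  set Pp : ℕ → ℕ := fun j => (st j).2 with hPdef
  set q : ℕ → ℕ := fun j => Q j (t j) (Pp j) with hqdef
  set Hs : ℕ → ℕ := fun j => Hf j (t j) (Pp j) with hHdef
  set ns : ℕ → ℕ := fun j => Nf j (t j) (Pp j) with hnsdef
  have ht0 : t 0 = 1 := rfl
  have htS : ∀ j, t (j+1) = t j + ns j + 1 := fun j => rfl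
  have hPS : ∀ j, Pp (j+1) = q j + ns j * Hs j := fun j => rfl
  have hHj : ∀ j, j + 1 ≤ Hs j := fun j => hH1 j (t j) (Pp j)
  have hnsj : ∀ j, 1 ≤ ns j := fun j => hn1 j (t j) (Pp j)
  have hPqj : ∀ j, Pp j < q j := fun j => hPq j (t j) (Pp j)
  have hq2j : ∀ j, (j+1)*(t j+1) ≤ q j := fun j => hq2 j (t j) (Pp j)
  have hsumj : ∀ j, (ε/4) * ((q j + ns j * Hs j : ℕ) : ℝ) ≤
      ∑ i ∈ Finset.range (ns j), ‖∑ x ∈ Finset.Ico (q j + i*Hs j) (q j + i*Hs j + Hs j), z x‖ :=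
    fun j => hsum j (t j) (Pp j)
  -- basic facts
  have ht_lb : ∀ j, j + 1 ≤ t j := by
    intro j
    induction j with
    | zero => simp [ht0]
    | succ j ih => rw [htS]; have := hnsj j; omega
  have htmono : StrictMono t := by
    apply strictMono_nat_of_lt_succ
    intro j
    rw [htS]; have := hnsj j; omega
  have hq1 : ∀ j, 1 ≤ q j := by
    intro j
    have h1 : 0 < (j+1)*(t j+1) := Nat.mul_pos (by omega) (by omega)
    have h2 := hq2j j
    omega
  have hq_lb : ∀ j, j + 1 ≤ q j := by
    intro j
    have h1 : j + 1 ≤ (j+1)*(t j+1) := Nat.le_mul_of_pos_right _ (by omega)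
    exact le_trans h1 (hq2j j)
  have hPq_next : ∀ j, q j < Pp (j+1) := by
    intro j
    rw [hPS]
    have h1 : 1 ≤ ns j * Hs j := Nat.one_le_iff_ne_zero.2 (Nat.mul_ne_zero (by have := hnsj j; omega) (by have := hHj j; omega))
    omega
  have hqmono : StrictMono q := by
    apply strictMono_nat_of_lt_succ
    intro j
    exact lt_trans (hPq_next j) (hPqj (j+1))
  -- definition of b
  set J : ℕ → ℕ := fun k => Nat.findGreatest (fun j => t j ≤ k) k with hJdef
  set b : ℕ → ℕ := fun k => if k = 0 then 0 else q (J k) + (k - t (J k)) * Hs (J k) with hbdef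
  have hb0 : b 0 = 0 := rfl
  have hJspec : ∀ k, 1 ≤ k → t (J k) ≤ k ∧ k < t (J k + 1) := by
    intro k hk
    have h1 : t (J k) ≤ k := by
      exact Nat.findGreatest_spec (m := 0) (P := fun j => t j ≤ k) (Nat.zero_le _)
        (by simpa [ht0] using hk)
    refine ⟨h1, ?_⟩
    by_contra hcon
    push_neg at hcon
    have h2 : J k + 1 ≤ k := by
      have := ht_lb (J k + 1)
      omega
    exact Nat.findGreatest_is_greatest (Nat.lt_succ_self (J k)) h2 hcon
  have hJuniq : ∀ j k, t j ≤ k → k < t (j+1) → J k = j := by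
    intro j k h1 h2
    have hk1 : 1 ≤ k := le_trans (le_trans (by omega) (ht_lb j)) h1
    obtain ⟨h3, h4⟩ := hJspec k hk1
    rcases lt_trichotomy (J k) j with h | h | h
    · exfalso
      have : t (J k + 1) ≤ t j := htmono.monotone (Nat.succ_le_of_lt h)
      omega
    · exact h
    · exfalso
      have : t (j + 1) ≤ t (J k) := htmono.monotone (Nat.succ_le_of_lt h)
      omega
  have hbseg : ∀ j k, t j ≤ k → k < t (j+1) → b k = q j + (k - t j) * Hs j := by
    intro j k h1 h2
    have hk1 : 1 ≤ k := le_trans (le_trans (by omega) (ht_lb j)) h1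
    rw [hbdef]
    simp only [if_neg (by omega : ¬ k = 0)]
    rw [hJuniq j k h1 h2]
  have hbt : ∀ j, b (t j) = q j := by
    intro j
    rw [hbseg j (t j) le_rfl (by rw [htS]; have := hnsj j; omega)]
    simp
  have hblast : ∀ j, b (t j + ns j) = q j + ns j * Hs j := by
    intro j
    rw [hbseg j (t j + ns j) (by omega) (by rw [htS]; omega)]
    simp
  -- strict monotonicity of b
  have hbmono : StrictMono b := by
    apply strictMono_nat_of_lt_succ
    intro k
    rcases Nat.eq_zero_or_pos k with rfl | hk
    · rw [hb0]
      have h1 : b 1 = q 0 := by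
        have := hbt 0
        rw [ht0] at this
        exact this
      rw [h1]
      exact hq1 0
    · obtain ⟨h1, h2⟩ := hJspec k hk
      set j := J k with hj
      rcases Nat.lt_or_ge (k+1) (t (j+1)) with h3 | h3
      · rw [hbseg j k h1 h2, hbseg j (k+1) (by omega) h3]
        have h4 : k + 1 - t j = (k - t j) + 1 := by omega
        rw [h4, Nat.succ_mul]
        have := hHj j
        omega
      · have h4 : k + 1 = t (j+1) := by omega
        have h5 : k = t j + ns j := by rw [htS] at h4; omega
        rw [hbseg j k h1 h2, h4, hbt (j+1)]
        have h6 : k - t j = ns j := by omega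
        rw [h6]
        calc q j + ns j * Hs j = Pp (j+1) := (hPS j).symm
        _ < q (j+1) := hPqj (j+1)
  have hb1 : 0 < b 1 := by
    have h1 : b 1 = q 0 := by
      have := hbt 0; rw [ht0] at this; exact this
    rw [h1]; exact hq1 0
  refine ⟨b, hbmono, hb1, ?_, ?_⟩
  · -- density zero
    set JQ : ℕ → ℕ := fun M => Nat.findGreatest (fun j => q j ≤ M) M with hJQdef
    have hJQspec : ∀ M, q 0 ≤ M → q (JQ M) ≤ M ∧ M < q (JQ M + 1) := by
      intro M hM
      have h1 : q (JQ M) ≤ M :=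
        Nat.findGreatest_spec (m := 0) (P := fun j => q j ≤ M) (Nat.zero_le _) hM
      refine ⟨h1, ?_⟩
      by_contra hcon
      push_neg at hcon
      have h2 : JQ M + 1 ≤ M := by have := hq_lb (JQ M + 1); omega
      exact Nat.findGreatest_is_greatest (Nat.lt_succ_self _) h2 hcon
    have hJQge : ∀ j₀ M, q j₀ ≤ M → j₀ ≤ JQ M := by
      intro j₀ M h
      exact Nat.le_findGreatest (le_trans (by have := hq_lb j₀; omega) h) h
    have hcard : ∀ M, q 0 ≤ M →
        ((Finset.Icc 1 M).filter (fun k => b k ≤ M)).card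
          ≤ t (JQ M) + (M - q (JQ M))/(Hs (JQ M)) := by
      intro M hM
      obtain ⟨hqle, hqgt⟩ := hJQspec M hM
      set j := JQ M with hjdef
      set D := (M - q j)/(Hs j) with hD
      clear_value D
      have hsub : (Finset.Icc 1 M).filter (fun k => b k ≤ M) ⊆
          Finset.Ico 1 (t j) ∪ Finset.Icc (t j) (t j + D) := by
        intro k hk
        simp only [Finset.mem_filter, Finset.mem_Icc] at hk
        obtain ⟨⟨hk1, hkM⟩, hbk⟩ := hk
        have hklt : k < t (j+1) := by
          by_contra hcon
          push_neg at hcon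
          have h3 : b (t (j+1)) ≤ b k := hbmono.monotone hcon
          rw [hbt (j+1)] at h3
          exact absurd (le_trans h3 hbk) (not_le.2 hqgt)
        rcases Nat.lt_or_ge k (t j) with h4 | h4
        · exact Finset.mem_union_left _ (Finset.mem_Ico.2 ⟨hk1, h4⟩)
        · apply Finset.mem_union_right
          rw [Finset.mem_Icc]
          refine ⟨h4, ?_⟩
          rw [hbseg j k h4 hklt] at hbk
          have h5 : (k - t j) * Hs j ≤ M - q j := by omega
          have h6 : k - t j ≤ D := by
            rw [hD]
            exact (Nat.le_div_iff_mul_le (by have := hHj j; omega)).2 h5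
          omega
      calc ((Finset.Icc 1 M).filter (fun k => b k ≤ M)).card
          ≤ (Finset.Ico 1 (t j) ∪ Finset.Icc (t j) (t j + D)).card := Finset.card_le_card hsub
      _ ≤ (Finset.Ico 1 (t j)).card + (Finset.Icc (t j) (t j + D)).card := Finset.card_union_le _ _
      _ = (t j - 1) + (D + 1) := by rw [Nat.card_Ico, Nat.card_Icc]; omega
      _ ≤ t j + D := by have := ht_lb j; omega
    rw [Metric.tendsto_atTop]
    intro δ hδ
    obtain ⟨j₀, hj₀⟩ := exists_nat_gt (2/δ)
    refine ⟨q j₀, fun M hM => ?_⟩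
    have hq0M : q 0 ≤ M := le_trans (hqmono.monotone (Nat.zero_le j₀)) hM
    obtain ⟨h1, h2⟩ := hJQspec M hq0M
    set j := JQ M with hjdef
    have hjj₀ : j₀ ≤ j := hJQge j₀ M hM
    have hM1 : 1 ≤ M := le_trans (hq1 j₀) hM
    have hMpos : (0:ℝ) < M := by exact_mod_cast hM1
    have hHsj1 : 1 ≤ Hs j := by have := hHj j; omega
    have hHpos : (0:ℝ) < Hs j := by exact_mod_cast hHsj1
    have hcardM := hcard M hq0M
    have hDle : (((M - q j)/(Hs j) : ℕ) : ℝ) ≤ (M:ℝ)/(Hs j) := by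
      calc (((M - q j)/(Hs j) : ℕ) : ℝ) ≤ ((M/(Hs j) : ℕ) : ℝ) := by
            exact_mod_cast Nat.div_le_div_right (Nat.sub_le _ _)
      _ ≤ (M:ℝ)/(Hs j) := Nat.cast_div_le
    have hcardR : ((((Finset.Icc 1 M).filter (fun k => b k ≤ M)).card : ℕ) : ℝ)
        ≤ (t j : ℝ) + (M:ℝ)/(Hs j) := by
      calc ((((Finset.Icc 1 M).filter (fun k => b k ≤ M)).card : ℕ) : ℝ)
          ≤ ((t j + (M - q j)/(Hs j) : ℕ) : ℝ) := by exact_mod_cast hcardM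
      _ = (t j : ℝ) + (((M - q j)/(Hs j) : ℕ) : ℝ) := by push_cast; ring
      _ ≤ _ := by linarith
    rw [Real.dist_eq, sub_zero, abs_of_nonneg (by positivity)]
    have hqjM : ((j:ℝ)+1) * ((t j : ℝ) + 1) ≤ M := by
      have h8 : (j+1)*(t j+1) ≤ M := le_trans (hq2j j) h1
      exact_mod_cast h8
    have hstep1 : (t j : ℝ)/M ≤ 1/((j:ℝ)+1) := by
      rw [div_le_div_iff₀ hMpos (by positivity)]
      nlinarith
    have hstep2 : (1:ℝ)/(Hs j) ≤ 1/((j:ℝ)+1) := by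
      apply one_div_le_one_div_of_le (by positivity)
      exact_mod_cast hHj j
    have hstep3 : (1:ℝ)/((j:ℝ)+1) ≤ 1/((j₀:ℝ)+1) := by
      apply one_div_le_one_div_of_le (by positivity)
      exact_mod_cast (by omega : j₀+1 ≤ j+1)
    have hfinal : 2/((j₀:ℝ)+1) < δ := by
      have h9 : 2/δ < (j₀:ℝ)+1 := lt_trans hj₀ (by linarith : (j₀:ℝ) < (j₀:ℝ)+1)
      rw [div_lt_iff₀ hδ] at h9
      rw [div_lt_iff₀ (by positivity : (0:ℝ) < (j₀:ℝ)+1)]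
      linarith
    calc ((((Finset.Icc 1 M).filter (fun k => b k ≤ M)).card : ℕ) : ℝ) / M
        ≤ ((t j : ℝ) + (M:ℝ)/(Hs j))/M := by
          apply div_le_div_of_nonneg_right hcardR hMpos.le
    _ = (t j : ℝ)/M + ((M:ℝ)/(Hs j))/M := by ring
    _ = (t j : ℝ)/M + 1/(Hs j) := by
          congr 1
          field_simp
    _ ≤ 1/((j:ℝ)+1) + 1/((j:ℝ)+1) := add_le_add hstep1 hstep2
    _ ≤ 1/((j₀:ℝ)+1) + 1/((j₀:ℝ)+1) := add_le_add hstep3 hstep3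
    _ = 2/((j₀:ℝ)+1) := by ring
    _ < δ := hfinal
  · -- non-convergence
    intro hcon
    have hev : ∀ᶠ K in Filter.atTop, (1 / (b K : ℝ)) *
        ∑ k ∈ Finset.Ico 1 K, ‖∑ n ∈ Finset.Ico (b k) (b (k + 1)), z n‖ < ε/4 :=
      hcon.eventually_lt_const (by positivity : (0:ℝ) < ε/4)
    obtain ⟨N, hN⟩ := Filter.eventually_atTop.1 hev
    set K := t N + ns N with hKdef
    have hKt : K < t (N+1) := by rw [htS]; omega
    have hKN : N ≤ K := by have := ht_lb N; omega
    have hlt := hN K hKN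
    have hbK : b K = q N + ns N * Hs N := hblast N
    have hbK1 : 1 ≤ b K := by rw [hbK]; have := hq1 N; omega
    have hbKpos : (0:ℝ) < b K := by exact_mod_cast hbK1
    have hsum2 : ∑ k ∈ Finset.Ico (t N) K, ‖∑ n ∈ Finset.Ico (b k) (b (k+1)), z n‖
        = ∑ i ∈ Finset.range (ns N), ‖∑ x ∈ Finset.Ico (q N + i*Hs N) (q N + i*Hs N + Hs N), z x‖ := by
      rw [Finset.sum_Ico_eq_sum_range]
      have hKt2 : K - t N = ns N := by omega
      rw [hKt2]
      apply Finset.sum_congr rfl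
      intro i hi
      rw [Finset.mem_range] at hi
      have e1 : b (t N + i) = q N + i * Hs N := by
        rw [hbseg N _ (by omega) (by rw [htS]; omega)]
        congr 2
        omega
      have e2 : b (t N + i + 1) = q N + (i+1) * Hs N := by
        rw [hbseg N _ (by omega) (by rw [htS]; omega)]
        congr 2
        omega
      rw [e1, e2, Nat.succ_mul, ← Nat.add_assoc]
    have hsum1 : ∑ k ∈ Finset.Ico (t N) K, ‖∑ n ∈ Finset.Ico (b k) (b (k+1)), z n‖
        ≤ ∑ k ∈ Finset.Ico 1 K, ‖∑ n ∈ Finset.Ico (b k) (b (k+1)), z n‖ := by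
      apply Finset.sum_le_sum_of_subset_of_nonneg
      · intro k hk
        rw [Finset.mem_Ico] at hk ⊢
        have := ht_lb N
        omega
      · intro k _ _
        exact norm_nonneg _
    have h7 : (ε/4) * (b K : ℝ) ≤
        ∑ k ∈ Finset.Ico 1 K, ‖∑ n ∈ Finset.Ico (b k) (b (k+1)), z n‖ := by
      calc (ε/4)*(b K:ℝ) = (ε/4) * ((q N + ns N * Hs N : ℕ):ℝ) := by rw [hbK]
      _ ≤ ∑ i ∈ Finset.range (ns N), ‖∑ x ∈ Finset.Ico (q N + i*Hs N) (q N + i*Hs N + Hs N), z x‖ :=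
          hsumj N
      _ = ∑ k ∈ Finset.Ico (t N) K, ‖∑ n ∈ Finset.Ico (b k) (b (k+1)), z n‖ := hsum2.symm
      _ ≤ _ := hsum1
    have hge : (ε/4) ≤ (1 / (b K : ℝ)) *
        ∑ k ∈ Finset.Ico 1 K, ‖∑ n ∈ Finset.Ico (b k) (b (k + 1)), z n‖ := by
      have heq : (1 / (b K : ℝ)) * ∑ k ∈ Finset.Ico 1 K, ‖∑ n ∈ Finset.Ico (b k) (b (k+1)), z n‖
          = (∑ k ∈ Finset.Ico 1 K, ‖∑ n ∈ Finset.Ico (b k) (b (k+1)), z n‖) / (b K : ℝ) := by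
        ring
      rw [heq, le_div_iff₀ hbKpos]
      linarith
    linarith


end ShortAvgAux

theorem short_average_iff_strong_lomo_shape
    {B : Type*} [NormedAddCommGroup B] [NormedSpace ℝ B]
    (z : ℕ → B) (hz : ∃ R : ℝ, ∀ n, ‖z n‖ ≤ R) :
    (Filter.limsup (fun H : ℕ =>
        Filter.limsup (fun M : ℕ =>
          (1 / (M : ℝ)) * ∑ m ∈ Finset.Icc 1 M,
            ‖(H : ℝ)⁻¹ • ∑ h ∈ Finset.Icc 1 H, z (m + h)‖) Filter.atTop)
      Filter.atTop = 0)
    ↔ (∀ b : ℕ → ℕ, StrictMono b → 0 < b 1 →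
        Filter.Tendsto (fun M : ℕ =>
            (((Finset.Icc 1 M).filter (fun k => b k ≤ M)).card : ℝ) / M)
          Filter.atTop (nhds 0) →
        Filter.Tendsto (fun K : ℕ => (1 / (b K : ℝ)) *
            ∑ k ∈ Finset.Ico 1 K, ‖∑ n ∈ Finset.Ico (b k) (b (k + 1)), z n‖)
          Filter.atTop (nhds 0)) := by
  obtain ⟨R₀, hR₀⟩ := hz
  set R := max R₀ 1 with hRdef
  have hR : ∀ n, ‖z n‖ ≤ R := fun n => le_trans (hR₀ n) (le_max_left _ _)
  have hR1 : (1:ℝ) ≤ R := le_max_right _ _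
  constructor
  · intro hL b hb hb1 hdens
    exact forward_dir z hR hR1 hL b hb hb1 hdens
  · intro hRHS
    by_contra hL
    set A : ℕ → ℕ → ℝ := fun H M => (1 / (M : ℝ)) * ∑ m ∈ Finset.Icc 1 M,
      ‖(H:ℝ)⁻¹ • ∑ h ∈ Finset.Icc 1 H, z (m+h)‖ with hA_def
    set g : ℕ → ℝ := fun H => Filter.limsup (A H) Filter.atTop with hg_def
    have hL' : Filter.limsup g Filter.atTop ≠ 0 := hL
    have hAnn : ∀ H M, 0 ≤ A H M := by
      intro H M
      apply mul_nonneg (by positivity)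
      exact Finset.sum_nonneg fun m _ => norm_nonneg _
    have hAR : ∀ H M, A H M ≤ R := by
      intro H M
      rcases Nat.eq_zero_or_pos M with h0 | hM
      · subst h0; simp [hA_def]; linarith
      · have hMpos : (0:ℝ) < M := by exact_mod_cast hM
        have haR : ∀ m : ℕ, ‖(H:ℝ)⁻¹ • ∑ h ∈ Finset.Icc 1 H, z (m+h)‖ ≤ R := by
          intro m
          rcases Nat.eq_zero_or_pos H with hH0 | hH
          · subst hH0; simp; linarith
          · have hHpos : (0:ℝ) < H := by exact_mod_cast hH
            rw [norm_smul, norm_inv, Real.norm_natCast]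
            calc (H:ℝ)⁻¹ * ‖∑ h ∈ Finset.Icc 1 H, z (m+h)‖ ≤ (H:ℝ)⁻¹ * (H * R) := by
                  apply mul_le_mul_of_nonneg_left _ (by positivity)
                  calc ‖∑ h ∈ Finset.Icc 1 H, z (m+h)‖ ≤ ∑ h ∈ Finset.Icc 1 H, ‖z (m+h)‖ :=
                        norm_sum_le _ _
                  _ ≤ ∑ h ∈ Finset.Icc 1 H, R := Finset.sum_le_sum fun h _ => hR _
                  _ = H * R := by rw [Finset.sum_const, Nat.card_Icc]; simp [nsmul_eq_mul]
            _ = R := by field_simp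
        calc A H M ≤ (1/(M:ℝ)) * ∑ m ∈ Finset.Icc 1 M, R := by
              apply mul_le_mul_of_nonneg_left _ (by positivity)
              exact Finset.sum_le_sum fun m _ => haR m
        _ = (1/(M:ℝ)) * (M * R) := by rw [Finset.sum_const, Nat.card_Icc]; simp [nsmul_eq_mul]
        _ = R := by field_simp
    have hAbdd : ∀ H, IsBoundedUnder (· ≤ ·) Filter.atTop (A H) :=
      fun H => Filter.isBoundedUnder_of ⟨R, fun M => hAR H M⟩
    have hgnn : ∀ H, 0 ≤ g H := fun H =>
      Filter.le_limsup_of_frequently_le (Filter.Frequently.of_forall fun M => hAnn H M) (hAbdd H)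
    have hgR : ∀ H, g H ≤ R := fun H =>
      Filter.limsup_le_of_le (Filter.isCoboundedUnder_le_of_le _ fun M => hAnn H M)
        (Filter.Eventually.of_forall fun M => hAR H M)
    have hgbdd : IsBoundedUnder (· ≤ ·) Filter.atTop g := Filter.isBoundedUnder_of ⟨R, hgR⟩
    have hc0 : 0 ≤ Filter.limsup g Filter.atTop :=
      Filter.le_limsup_of_frequently_le (Filter.Frequently.of_forall hgnn) hgbdd
    have hcpos : 0 < Filter.limsup g Filter.atTop := lt_of_le_of_ne hc0 (Ne.symm hL')
    set ε := Filter.limsup g Filter.atTop / 2 with hεdef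
    have hε : 0 < ε := half_pos hcpos
    have hfreqH : ∃ᶠ H in Filter.atTop, ε < g H :=
      Filter.frequently_lt_of_lt_limsup (Filter.isCoboundedUnder_le_of_le _ hgnn)
        (by rw [hεdef]; linarith)
    have hfreq : ∀ N : ℕ, ∃ H : ℕ, N ≤ H ∧ ∀ P' : ℕ, ∃ M : ℕ, P' ≤ M ∧
        ε < (1 / (M : ℝ)) * ∑ m ∈ Finset.Icc 1 M,
          ‖(H:ℝ)⁻¹ • ∑ h ∈ Finset.Icc 1 H, z (m+h)‖ := by
      intro N
      obtain ⟨H, hHN, hHg⟩ := (Filter.frequently_atTop.1 hfreqH) N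
      refine ⟨H, hHN, ?_⟩
      intro P'
      have hfM : ∃ᶠ M in Filter.atTop, ε < A H M :=
        Filter.frequently_lt_of_lt_limsup (Filter.isCoboundedUnder_le_of_le _ fun M => hAnn H M) hHg
      obtain ⟨M, hMP, hMA⟩ := (Filter.frequently_atTop.1 hfM) P'
      exact ⟨M, hMP, hMA⟩
    obtain ⟨b, hbmono, hb1, hdens, hnotconv⟩ :=
      construct z hε (exists_segment z hR hR1 hε hfreq)
    exact hnotconv (hRHS b hbmono hb1 hdens)
end

section
/- Let C be a closed subset of the circle 𝕋 = ℝ/ℤ and let (q_n) be a sequence of positive integers such that ‖q_n α‖ → 0 for every α ∈ C, where ‖·‖ denotes the distance to 0 in ℝ/ℤ. Let T : C × 𝕋 → C × 𝕋 be the homeomorphism T(x,y) = (x, x+y). Then for every T-invariant Borel probability measure ν on C × 𝕋 (i.e., ν(T^{-1}E) = ν(E) for all Borel sets E) and every f ∈ L²(C × 𝕋, ν), one has ∫ |f(T^{q_n} z) − f(z)|² dν(z) → 0 as n → ∞; that is, (q_n) is a rigidity time for the system (C × 𝕋, ν, T). -/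
/-!
Since `T^[k] (x, y) = (x, k • x + y)`, the hypothesis on `C` says exactly that `T^[q n] → id`
pointwise. For a bounded continuous `g` this gives `g ∘ T^[q n] → g` in `L²(ν)` by bounded
convergence. Composition with the measure-preserving map `T^[q n]` is an isometry of `L²(ν)` and
bounded continuous functions are dense there, so an `ε/3` argument extends this to every `f`.
-/

open Filter MeasureTheory
open scoped ENNReal Topology

section

variable {α E : Type*} [MeasurableSpace α] [NormedAddCommGroup E] {μ : Measure α} {p : ℝ≥0∞}

theorem unifIntegrable_of_forall_norm_le {ι : Type*} (hp : 1 ≤ p) (hp' : p ≠ ∞)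
    {F : ι → α → E} (hF : ∀ i, AEStronglyMeasurable (F i) μ) {C : ℝ}
    (hC : ∀ i x, ‖F i x‖ ≤ C) : UnifIntegrable F p μ := by
  refine unifIntegrable_of hp hp' hF fun _ _ => ⟨C.toNNReal + 1, fun i => ?_⟩
  have hempty : {x | C.toNNReal + 1 ≤ ‖F i x‖₊} = ∅ := by
    ext x
    simp only [Set.mem_ofPred_eq, Set.mem_empty_iff_false, iff_false, not_le]
    rw [← NNReal.coe_lt_coe, coe_nnnorm]
    push_cast
    linarith [hC i x, C.le_coe_toNNReal]
  simp [hempty]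

theorem eLpNorm_comp_sub_le {S : α → α} (hS : MeasurePreserving S μ μ) {f g : α → E}
    (hf : AEStronglyMeasurable f μ) (hg : AEStronglyMeasurable g μ) (hp : 1 ≤ p) :
    eLpNorm (f ∘ S - f) p μ ≤
      eLpNorm (f - g) p μ + eLpNorm (g ∘ S - g) p μ + eLpNorm (f - g) p μ := by
  have hfgS : AEStronglyMeasurable ((f - g) ∘ S) μ := (hf.sub hg).comp_measurePreserving hS
  have hgS : AEStronglyMeasurable (g ∘ S - g) μ := (hg.comp_measurePreserving hS).sub hg
  calc eLpNorm (f ∘ S - f) p μ = eLpNorm ((f - g) ∘ S + (g ∘ S - g) - (f - g)) p μ := by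
        congr 1; ext x; simp only [Function.comp_apply, Pi.sub_apply, Pi.add_apply]; abel
    _ ≤ eLpNorm ((f - g) ∘ S) p μ + eLpNorm (g ∘ S - g) p μ + eLpNorm (f - g) p μ :=
        (eLpNorm_sub_le (hfgS.add hgS) (hf.sub hg) hp).trans
          (by gcongr; exact eLpNorm_add_le hfgS hgS hp)
    _ = _ := by rw [eLpNorm_comp_measurePreserving (hf.sub hg) hS]

theorem integral_norm_sq_eq_toReal_eLpNorm_sq {F : α → E} (hF : AEStronglyMeasurable F μ) :
    ∫ x, ‖F x‖ ^ 2 ∂μ = (eLpNorm F 2 μ).toReal ^ 2 := by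
  have h := lpNorm_eq_integral_norm_rpow_toReal two_ne_zero ENNReal.ofNat_ne_top hF
  rw [toReal_eLpNorm hF]
  have hnonneg : 0 ≤ ∫ x, ‖F x‖ ^ (2 : ℝ) ∂μ := integral_nonneg fun x => by positivity
  simp only [ENNReal.toReal_ofNat] at h
  rw [h, ← Real.rpow_natCast, ← Real.rpow_mul hnonneg]
  norm_num

theorem tendsto_integral_norm_sq_of_tendsto_eLpNorm {ι : Type*} {l : Filter ι} {F : ι → α → E}
    (hF : ∀ i, AEStronglyMeasurable (F i) μ) (h : Tendsto (fun i => eLpNorm (F i) 2 μ) l (𝓝 0)) :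
    Tendsto (fun i => ∫ x, ‖F i x‖ ^ 2 ∂μ) l (𝓝 0) := by
  simp only [integral_norm_sq_eq_toReal_eLpNorm_sq (hF _)]
  simpa using ((ENNReal.tendsto_toReal ENNReal.zero_ne_top).comp h).pow 2

end

section

variable {α E : Type*} [TopologicalSpace α] [MeasurableSpace α] [NormedAddCommGroup E]
  {μ : Measure α} [IsFiniteMeasure μ] {p : ℝ≥0∞} {S : ℕ → α → α}

theorem BoundedContinuousFunction.tendsto_eLpNorm_comp_sub (hp : 1 ≤ p) (hp' : p ≠ ∞)
    (hS : ∀ n, MeasurePreserving (S n) μ μ) (hSx : ∀ x, Tendsto (S · x) atTop (𝓝 x))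
    (g : BoundedContinuousFunction α E) (hg : AEStronglyMeasurable (⇑g) μ) :
    Tendsto (fun n => eLpNorm (⇑g ∘ S n - ⇑g) p μ) atTop (𝓝 0) := by
  have hgS : ∀ n, AEStronglyMeasurable (⇑g ∘ S n) μ := fun n => hg.comp_measurePreserving (hS n)
  refine tendsto_Lp_finite_of_tendsto_ae hp hp' hgS
    (.of_bound hg ‖g‖ (ae_of_all _ g.norm_coe_le_norm)) ?_ ?_
  · exact unifIntegrable_of_forall_norm_le hp hp' hgS fun _ _ => g.norm_coe_le_norm _
  · exact ae_of_all _ fun x => (g.continuous.tendsto x).comp (hSx x)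

theorem tendsto_eLpNorm_comp_sub [NormalSpace α] [BorelSpace α] [μ.WeaklyRegular]
    [NormedSpace ℝ E] (hp : 1 ≤ p) (hp' : p ≠ ∞)
    (hS : ∀ n, MeasurePreserving (S n) μ μ) (hSx : ∀ x, Tendsto (S · x) atTop (𝓝 x))
    {f : α → E} (hf : MemLp f p μ) :
    Tendsto (fun n => eLpNorm (f ∘ S n - f) p μ) atTop (𝓝 0) := by
  rw [ENNReal.tendsto_nhds_zero]
  intro ε hε
  have hε3 : ε / 3 ≠ 0 := by simp [hε.ne']
  obtain ⟨g, hfg, hg⟩ := hf.exists_boundedContinuous_eLpNorm_sub_le hp' hε3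
  filter_upwards [ENNReal.tendsto_nhds_zero.mp
    (g.tendsto_eLpNorm_comp_sub hp hp' hS hSx hg.1) _ (pos_iff_ne_zero.mpr hε3)] with n hn
  calc eLpNorm (f ∘ S n - f) p μ
      ≤ eLpNorm (f - ⇑g) p μ + eLpNorm (⇑g ∘ S n - ⇑g) p μ + eLpNorm (f - ⇑g) p μ :=
        eLpNorm_comp_sub_le (hS n) hf.1 hg.1 hp
    _ ≤ ε / 3 + ε / 3 + ε / 3 := by gcongr
    _ = ε := ENNReal.add_thirds ε

end

section

variable {G : Type*} [AddMonoid G] {C : Set G} {T : C × G → C × G}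

theorem iterate_apply_of_skew (hT : ∀ z, T z = (z.1, (z.1 : G) + z.2)) (k : ℕ) (z : C × G) :
    T^[k] z = (z.1, k • (z.1 : G) + z.2) := by
  induction k with
  | zero => simp
  | succ k ih => rw [Function.iterate_succ_apply', ih, hT, succ_nsmul', add_assoc]

theorem tendsto_iterate_of_skew [TopologicalSpace G] [ContinuousAdd G]
    (hT : ∀ z, T z = (z.1, (z.1 : G) + z.2)) {q : ℕ → ℕ}
    (hq : ∀ x ∈ C, Tendsto (fun n => q n • x) atTop (𝓝 0)) (z : C × G) :
    Tendsto (fun n => T^[q n] z) atTop (𝓝 z) := by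
  simp only [iterate_apply_of_skew hT]
  refine tendsto_const_nhds.prodMk_nhds ?_
  simpa using (hq z.1 z.1.2).add_const z.2

end

theorem rigidity_of_skew_rotation_systems_general
    (C : Set (AddCircle (1 : ℝ)))
    (q : ℕ → ℕ)
    (hrig : ∀ α ∈ C, Filter.Tendsto (fun n => ‖(q n : ℤ) • α‖) Filter.atTop (nhds 0))
    (T : C × AddCircle (1 : ℝ) → C × AddCircle (1 : ℝ))
    (hT : ∀ z : C × AddCircle (1 : ℝ), T z = (z.1, (z.1 : AddCircle (1 : ℝ)) + z.2))
    (ν : MeasureTheory.Measure (C × AddCircle (1 : ℝ)))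
    [MeasureTheory.IsProbabilityMeasure ν]
    (hinv : ∀ E : Set (C × AddCircle (1 : ℝ)), MeasurableSet E → ν (T ⁻¹' E) = ν E)
    (f : C × AddCircle (1 : ℝ) → ℂ) (hf : MeasureTheory.MemLp f 2 ν) :
    Filter.Tendsto (fun n => ∫ z, ‖f (T^[q n] z) - f z‖ ^ 2 ∂ν)
      Filter.atTop (nhds 0) := by
  have hTmeas : Measurable T := by rw [funext hT]; fun_prop
  have hmp : MeasurePreserving T ν ν :=
    ⟨hTmeas, Measure.ext fun E hE => by rw [Measure.map_apply hTmeas hE, hinv E hE]⟩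
  have hq : ∀ α ∈ C, Tendsto (fun n => q n • α) atTop (𝓝 0) := fun α hα => by
    simpa [tendsto_zero_iff_norm_tendsto_zero, natCast_zsmul] using hrig α hα
  refine tendsto_integral_norm_sq_of_tendsto_eLpNorm
    (fun n => (hf.1.comp_measurePreserving (hmp.iterate _)).sub hf.1) ?_
  exact tendsto_eLpNorm_comp_sub one_le_two ENNReal.ofNat_ne_top (fun n => hmp.iterate _)
    (tendsto_iterate_of_skew hT hq) hf

theorem rigidity_of_skew_rotation_systems
    (C : Set (AddCircle (1 : ℝ))) (hC : IsClosed C)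
    (q : ℕ → ℕ) (hqpos : ∀ n, 0 < q n)
    (hrig : ∀ α ∈ C, Filter.Tendsto (fun n => ‖(q n : ℤ) • α‖) Filter.atTop (nhds 0))
    (T : C × AddCircle (1 : ℝ) → C × AddCircle (1 : ℝ))
    (hT : ∀ z : C × AddCircle (1 : ℝ), T z = (z.1, (z.1 : AddCircle (1 : ℝ)) + z.2))
    (ν : MeasureTheory.Measure (C × AddCircle (1 : ℝ)))
    [MeasureTheory.IsProbabilityMeasure ν]
    (hinv : ∀ E : Set (C × AddCircle (1 : ℝ)), MeasurableSet E → ν (T ⁻¹' E) = ν E)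
    (f : C × AddCircle (1 : ℝ) → ℂ) (hf : MeasureTheory.MemLp f 2 ν) :
    Filter.Tendsto (fun n => ∫ z, ‖f (T^[q n] z) - f z‖ ^ 2 ∂ν)
      Filter.atTop (nhds 0) :=
  rigidity_of_skew_rotation_systems_general C q hrig T hT ν hinv f hf
end

section
/- Let t ≥ 2 be an integer, a an integer, and q a positive integer. Suppose that limsup_{H→∞} limsup_{M→∞} (1/log M) · ∑_{m=1}^{M} (1/m) · sup_Q |(1/H) · ∑_{h=1}^{H} λ(m+h) e((a/q)·(m+h)^t + Q(m+h))| = 0, where the supremum is over all real polynomials Q of degree at most t−1. Then limsup_{H→∞} limsup_{M→∞} (1/log M) · ∑_{m=1}^{M} (1/m) · sup_P |(1/H) · ∑_{h=1}^{H} λ(m+h) e(P(m+h))| = 0, where the supremum is over all real polynomials P of degree at most t−1. -/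
open Filter Finset Polynomial

/-- The Liouville function `λ(n) = (-1)^Ω(n)`. -/
noncomputable def lio (n : ℕ) : ℝ := (-1 : ℝ) ^ n.primeFactorsList.length

/-- `e(t) = e^{2πit}`. -/
noncomputable def efn (t : ℝ) : ℂ := Complex.exp (2 * Real.pi * Complex.I * t)

/-!
Write `e(P(n)) = e(-(a/q) n^t) · e((a/q) n^t + P(n))`. The first factor is `q`-periodic in `n`,
so discrete Fourier inversion on `ℤ/qℤ` writes it as `∑_{k<q} c_k e(kn/q)` with `|c_k| ≤ 1`.
Since `t ≥ 2`, each `P + (k/q)X` still has degree at most `t - 1`, hence the supremum over `P`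
is at most `q` times the supremum of the twisted sums, pointwise in `m` and `H`. Both double
limsups are of nonnegative, bounded quantities, so the bound passes to them.
-/

lemma efn_add (x y : ℝ) : efn (x + y) = efn x * efn y := by
  rw [efn, efn, efn, ← Complex.exp_add]; push_cast; ring_nf

lemma efn_intCast (k : ℤ) : efn k = 1 := by
  rw [efn, ← Complex.exp_int_mul_two_pi_mul_I k]; push_cast; ring_nf

lemma norm_efn (x : ℝ) : ‖efn x‖ = 1 := by
  rw [efn, show 2 * Real.pi * Complex.I * x = ((2 * Real.pi * x : ℝ) : ℂ) * Complex.I by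
    push_cast; ring]
  exact Complex.norm_exp_ofReal_mul_I _

lemma periodic_efn_div_mul_pow (a : ℤ) (q t : ℕ) :
    Function.Periodic (fun n : ℕ => efn (a / q * (n : ℝ) ^ t)) q := by
  intro n
  rcases Nat.eq_zero_or_pos q with rfl | hq
  · simp
  obtain ⟨k, hk⟩ := sub_dvd_pow_sub_pow ((n + q : ℕ) : ℤ) n t
  have hkR : ((n + q : ℕ) : ℝ) ^ t = (n : ℝ) ^ t + q * k := by
    have := congrArg (fun z : ℤ => (z : ℝ)) hk
    push_cast at this ⊢
    linarith
  have hint : (a : ℝ) / q * (q * k) = ((a * k : ℤ) : ℝ) := by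
    push_cast; field_simp
  simp only [hkR, mul_add, hint, efn_add, efn_intCast, mul_one]

open ZMod in
lemma Function.Periodic.exists_eq_sum_efn {q : ℕ} [NeZero q] {f : ℕ → ℂ}
    (hf : Function.Periodic f q) {B : ℝ} (hB : ∀ n, ‖f n‖ ≤ B) :
    ∃ c : ZMod q → ℂ, (∀ k, ‖c k‖ ≤ B) ∧
      ∀ n : ℕ, f n = ∑ k : ZMod q, c k * efn (k.val / q * n) := by
  set Φ : ZMod q → ℂ := fun j => f j.val
  refine ⟨fun k => (q : ℂ)⁻¹ * 𝓕 Φ k, fun k => ?_, fun n => ?_⟩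
  · have hsum : ‖𝓕 Φ k‖ ≤ q * B := by
      rw [dft_apply]
      refine (norm_sum_le _ _).trans ?_
      simpa [norm_smul, stdAddChar_apply, Circle.norm_coe, Φ] using
        Finset.sum_le_sum fun (j : ZMod q) (_ : j ∈ Finset.univ) => hB j.val
    rw [norm_mul, norm_inv, Complex.norm_natCast,
      inv_mul_le_iff₀ (Nat.cast_pos.mpr (NeZero.pos q))]
    exact hsum
  · have hΦ : f n = 𝓕⁻ (𝓕 Φ) n := by
      rw [LinearEquiv.symm_apply_apply, ← hf.map_mod_nat, ← ZMod.val_natCast]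
    rw [hΦ, invDFT_apply, smul_eq_mul, Finset.mul_sum]
    refine Finset.sum_congr rfl fun k _ => ?_
    have : k * (n : ZMod q) = ((k.val * n : ℕ) : ℤ) := by simp
    rw [this, stdAddChar_coe, efn, smul_eq_mul]
    push_cast
    ring_nf

lemma norm_lio (n : ℕ) : ‖(lio n : ℂ)‖ = 1 := by
  simp [lio]

noncomputable def shortAvg (w : ℕ → ℂ) (φ : ℝ → ℝ) (m H : ℕ) : ℂ :=
  (H : ℂ)⁻¹ * ∑ h ∈ Icc 1 H, w (m + h) * efn (φ ((m + h : ℕ) : ℝ))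

section shortAvg

variable (w : ℕ → ℂ) (m H : ℕ)

lemma norm_shortAvg_le (φ : ℝ → ℝ) :
    ‖shortAvg w φ m H‖ ≤ (H : ℝ)⁻¹ * ∑ h ∈ Icc 1 H, ‖w (m + h)‖ := by
  rw [shortAvg, norm_mul, norm_inv, Complex.norm_natCast]
  gcongr
  refine (norm_sum_le _ _).trans_eq ?_
  simp [norm_efn]

lemma norm_shortAvg_le_one (hw : ∀ n, ‖w n‖ ≤ 1) (φ : ℝ → ℝ) :
    ‖shortAvg w φ m H‖ ≤ 1 := by
  refine (norm_shortAvg_le w m H φ).trans ?_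
  calc (H : ℝ)⁻¹ * ∑ h ∈ Icc 1 H, ‖w (m + h)‖ ≤ (H : ℝ)⁻¹ * H := by
        gcongr
        simpa using Finset.sum_le_sum fun h (_ : h ∈ Icc 1 H) => hw (m + h)
    _ ≤ 1 := inv_mul_le_one

lemma shortAvg_eq_sum {ι : Type*} (s : Finset ι) (c : ι → ℂ) {φ : ℝ → ℝ}
    {ψ : ι → ℝ → ℝ} (hφ : ∀ n : ℕ, efn (φ n) = ∑ k ∈ s, c k * efn (ψ k n)) :
    shortAvg w φ m H = ∑ k ∈ s, c k * shortAvg w (ψ k) m H := by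
  simp only [shortAvg, hφ, Finset.mul_sum]
  rw [Finset.sum_comm]
  refine Finset.sum_congr rfl fun k _ => Finset.sum_congr rfl fun h _ => ?_
  ring

lemma iSup_norm_shortAvg_le {d : ℕ} (hd : 1 ≤ d) (a : ℤ) (q t : ℕ) [NeZero q] :
    ⨆ P : {P : ℝ[X] // P.degree ≤ d}, ‖shortAvg w (fun x => P.1.eval x) m H‖ ≤
      q * ⨆ Q : {Q : ℝ[X] // Q.degree ≤ d},
        ‖shortAvg w (fun x => a / q * x ^ t + Q.1.eval x) m H‖ := by
  have hbdd : BddAbove (Set.range fun Q : {Q : ℝ[X] // Q.degree ≤ d} =>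
      ‖shortAvg w (fun x => a / q * x ^ t + Q.1.eval x) m H‖) :=
    ⟨_, Set.forall_mem_range.2 fun Q => norm_shortAvg_le w m H _⟩
  refine Real.iSup_le (fun P => ?_)
    (mul_nonneg q.cast_nonneg (Real.iSup_nonneg fun _ => norm_nonneg _))
  obtain ⟨c, hc, hexp⟩ := (periodic_efn_div_mul_pow (-a) q t).exists_eq_sum_efn
    (B := 1) fun n => (norm_efn _).le
  have hdeg (k : ZMod q) : (P.1 + C (k.val / q : ℝ) * X).degree ≤ (d : WithBot ℕ) :=
    (degree_add_le _ _).trans <| max_le P.2 <|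
      (degree_C_mul_X_le _).trans (by exact_mod_cast hd)
  let Q : ZMod q → {Q : ℝ[X] // Q.degree ≤ d} := fun k => ⟨_, hdeg k⟩
  have hφ : ∀ n : ℕ, efn (P.1.eval (n : ℝ)) =
      ∑ k, c k * efn (a / q * (n : ℝ) ^ t + (Q k).1.eval (n : ℝ)) := by
    intro n
    calc efn (P.1.eval (n : ℝ))
        = efn ((-a : ℤ) / q * (n : ℝ) ^ t) *
            efn (a / q * (n : ℝ) ^ t + P.1.eval (n : ℝ)) := by
          rw [← efn_add]; push_cast; ring_nf
      _ = _ := by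
          rw [hexp, Finset.sum_mul]
          refine Finset.sum_congr rfl fun k _ => ?_
          simp only [Q, eval_add, eval_mul, eval_C, eval_X, mul_assoc, ← efn_add]
          ring_nf
  rw [shortAvg_eq_sum w m H _ c (ψ := fun k x => a / q * x ^ t + (Q k).1.eval x) hφ]
  calc ‖∑ k, c k * shortAvg w (fun x => a / q * x ^ t + (Q k).1.eval x) m H‖
      ≤ ∑ k : ZMod q, 1 * ⨆ Q : {Q : ℝ[X] // Q.degree ≤ d},
          ‖shortAvg w (fun x => a / q * x ^ t + Q.1.eval x) m H‖ := by
        refine (norm_sum_le _ _).trans (Finset.sum_le_sum fun k _ => ?_)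
        rw [norm_mul]
        exact mul_le_mul (hc k) (le_ciSup hbdd (Q k)) (norm_nonneg _) zero_le_one
    _ = _ := by simp [ZMod.card]

end shortAvg

noncomputable def logAvg (c : ℕ → ℝ) (M : ℕ) : ℝ :=
  (Real.log M)⁻¹ * ∑ m ∈ Icc 1 M, (1 / (m : ℝ)) * c m

section logAvg

variable {c c' : ℕ → ℝ}

lemma logAvg_nonneg (M : ℕ) (hc : ∀ m, 0 ≤ c m) : 0 ≤ logAvg c M :=
  mul_nonneg (inv_nonneg.2 (Real.log_natCast_nonneg M))
    (Finset.sum_nonneg fun m _ => mul_nonneg (by positivity) (hc m))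

lemma logAvg_mono (M : ℕ) (h : ∀ m, c m ≤ c' m) : logAvg c M ≤ logAvg c' M := by
  unfold logAvg
  gcongr with m
  exact h m

lemma logAvg_const_mul (r : ℝ) (M : ℕ) : logAvg (fun m => r * c m) M = r * logAvg c M := by
  simp only [logAvg, Finset.mul_sum]
  exact Finset.sum_congr rfl fun m _ => by ring

lemma logAvg_le_two (hc : ∀ m, c m ≤ 1) {M : ℕ} (hM : 3 ≤ M) : logAvg c M ≤ 2 := by
  have hlog : 1 ≤ Real.log M := by
    rw [Real.le_log_iff_exp_le (by positivity)]
    have : (3 : ℝ) ≤ M := by exact_mod_cast hM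
    linarith [Real.exp_one_lt_d9]
  have hharm : ∑ m ∈ Icc 1 M, (1 / (m : ℝ)) * c m ≤ 1 + Real.log M := by
    calc ∑ m ∈ Icc 1 M, (1 / (m : ℝ)) * c m ≤ ∑ m ∈ Icc 1 M, (m : ℝ)⁻¹ :=
          Finset.sum_le_sum fun m _ => by
            simpa using mul_le_mul_of_nonneg_left (hc m) (by positivity : (0 : ℝ) ≤ 1 / m)
      _ = harmonic M := by simp [harmonic_eq_sum_Icc]
      _ ≤ 1 + Real.log M := harmonic_le_one_add_log M
  calc logAvg c M ≤ (Real.log M)⁻¹ * (1 + Real.log M) :=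
        mul_le_mul_of_nonneg_left hharm (by positivity)
    _ = (Real.log M)⁻¹ + 1 := by field_simp
    _ ≤ 2 := by linarith [inv_le_one_of_one_le₀ hlog]

end logAvg

lemma limsup_le_const_mul_limsup {α : Type*} {l : Filter α} [NeBot l] {u v : α → ℝ} {c : ℝ}
    (hc : 0 ≤ c) (hu : ∀ x, 0 ≤ u x) (hv : ∀ x, 0 ≤ v x) (huv : ∀ x, u x ≤ c * v x)
    (hvb : IsBoundedUnder (· ≤ ·) l v) : limsup u l ≤ c * limsup v l :=
  calc limsup u l ≤ limsup (fun x => c * v x) l :=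
        limsup_le_limsup (Eventually.of_forall huv) (isCoboundedUnder_le_of_le l hu)
          ((monotone_mul_left_of_nonneg hc).isBoundedUnder_le_comp hvb)
    _ = c * limsup v l :=
        ((monotone_mul_left_of_nonneg hc).map_limsup_of_continuousAt v
          (continuous_const_mul c).continuousAt hvb (isCoboundedUnder_le_of_le l hv)).symm

lemma limsup_limsup_eq_zero_of_le_const_mul {ι κ : Type*} {l₁ : Filter ι} {l₂ : Filter κ}
    [NeBot l₁] [NeBot l₂] {f g : ι → κ → ℝ} {c B : ℝ} (hc : 0 ≤ c)
    (hf : ∀ i j, 0 ≤ f i j) (hg : ∀ i j, 0 ≤ g i j) (hfg : ∀ i j, f i j ≤ c * g i j)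
    (hgB : ∀ i, ∀ᶠ j in l₂, g i j ≤ B)
    (h : limsup (fun i => limsup (g i) l₂) l₁ = 0) :
    limsup (fun i => limsup (f i) l₂) l₁ = 0 := by
  have hgb : ∀ i, IsBoundedUnder (· ≤ ·) l₂ (g i) := fun i =>
    isBoundedUnder_of_eventually_le (hgB i)
  have hfb : ∀ i, IsBoundedUnder (· ≤ ·) l₂ (f i) := fun i =>
    isBoundedUnder_of_eventually_le <| (hgB i).mono fun j hj =>
      (hfg i j).trans (mul_le_mul_of_nonneg_left hj hc)
  have hF : ∀ i, 0 ≤ limsup (f i) l₂ := fun i =>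
    le_limsup_of_frequently_le (Frequently.of_forall (hf i)) (hfb i)
  have hG : ∀ i, 0 ≤ limsup (g i) l₂ := fun i =>
    le_limsup_of_frequently_le (Frequently.of_forall (hg i)) (hgb i)
  have hFG : ∀ i, limsup (f i) l₂ ≤ c * limsup (g i) l₂ := fun i =>
    limsup_le_const_mul_limsup hc (hf i) (hg i) (hfg i) (hgb i)
  have hGB : ∀ i, limsup (g i) l₂ ≤ B := fun i =>
    limsup_le_of_le (isCoboundedUnder_le_of_le l₂ (hg i)) (hgB i)
  refine le_antisymm ?_ (le_limsup_of_frequently_le (Frequently.of_forall hF)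
    (isBoundedUnder_of_eventually_le (Eventually.of_forall fun i =>
      (hFG i).trans (mul_le_mul_of_nonneg_left (hGB i) hc))))
  calc limsup (fun i => limsup (f i) l₂) l₁ ≤ c * limsup (fun i => limsup (g i) l₂) l₁ :=
        limsup_le_const_mul_limsup hc hF hG hFG
          (isBoundedUnder_of_eventually_le (Eventually.of_forall hGB))
    _ = 0 := by rw [h, mul_zero]

theorem rational_leading_coefficient_reduction
    (t : ℕ) (ht : 2 ≤ t) (a : ℤ) (q : ℕ) (hq : 0 < q)
    (hyp : Filter.limsup (fun H : ℕ =>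
      Filter.limsup (fun M : ℕ =>
        (Real.log M)⁻¹ * ∑ m ∈ Finset.Icc 1 M, (1 / (m : ℝ)) *
          ⨆ Q : {Q : Polynomial ℝ // Q.degree ≤ ((t - 1 : ℕ) : WithBot ℕ)},
            Norm.norm ((H : ℂ)⁻¹ * ∑ h ∈ Finset.Icc 1 H,
              (lio (m + h) : ℂ) *
                efn (((a : ℝ) / (q : ℝ)) * ((m + h : ℕ) : ℝ) ^ t +
                  Q.1.eval ((m + h : ℕ) : ℝ))))
        Filter.atTop) Filter.atTop = 0) :
    Filter.limsup (fun H : ℕ =>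
      Filter.limsup (fun M : ℕ =>
        (Real.log M)⁻¹ * ∑ m ∈ Finset.Icc 1 M, (1 / (m : ℝ)) *
          ⨆ P : {P : Polynomial ℝ // P.degree ≤ ((t - 1 : ℕ) : WithBot ℕ)},
            Norm.norm ((H : ℂ)⁻¹ * ∑ h ∈ Finset.Icc 1 H,
              (lio (m + h) : ℂ) * efn (P.1.eval ((m + h : ℕ) : ℝ))))
        Filter.atTop) Filter.atTop = 0 := by
  have : NeZero q := ⟨hq.ne'⟩
  have hd : 1 ≤ t - 1 := by omega
  let w : ℕ → ℂ := fun n => lio n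
  have hw : ∀ n, ‖w n‖ ≤ 1 := fun n => (norm_lio n).le
  refine limsup_limsup_eq_zero_of_le_const_mul (c := q) (B := 2)
    (f := fun H => logAvg fun m => ⨆ P : {P : ℝ[X] // P.degree ≤ (t - 1 : ℕ)},
      ‖shortAvg w (fun x => P.1.eval x) m H‖)
    (g := fun H => logAvg fun m => ⨆ Q : {Q : ℝ[X] // Q.degree ≤ (t - 1 : ℕ)},
      ‖shortAvg w (fun x => a / q * x ^ t + Q.1.eval x) m H‖)
    q.cast_nonneg
    (fun H M => logAvg_nonneg M fun m => Real.iSup_nonneg fun _ => norm_nonneg _)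
    (fun H M => logAvg_nonneg M fun m => Real.iSup_nonneg fun _ => norm_nonneg _)
    (fun H M => ?_)
    (fun H => eventually_atTop.2 ⟨3, fun M => logAvg_le_two fun m =>
      Real.iSup_le (fun _ => norm_shortAvg_le_one w m H hw _) zero_le_one⟩)
    hyp
  rw [← logAvg_const_mul]
  exact logAvg_mono M fun m => iSup_norm_shortAvg_le w m H hd a q t
end
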